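/- For every P ∈ nCSP there exists a normal form N such that P =_E N. -/
import Mathlib


open Classical

noncomputable section

namespace PaperPCSP

/-! ### Finitely supported distributions as weight functions -/

/-- Weight functions on `X`; probability distributions are those satisfying `IsDist`. -/
abbrev Wt (X : Type) := X → ℝ

/-- The support of a weight function. -/
def dsupp {X : Type} (Δ : Wt X) : Set X := Function.support Δ

/-- `Δ` is a finitely supported probability distribution. -/
def IsDist {X : Type} (Δ : Wt X) : Prop :=
  (∀ x, 0 ≤ Δ x) ∧ (dsupp Δ).Finite ∧ ∑ᶠ x, Δ x = 1

/-- The point distribution at `x`. -/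
def dirac {X : Type} (x : X) : Wt X := fun y => if y = x then 1 else 0

/-- Pushforward of a weight function along a map. -/
def dmap {X Y : Type} (g : X → Y) (Δ : Wt X) : Wt Y :=
  fun y => ∑ᶠ x ∈ {x | g x = y}, Δ x

/-- Expected value of `f` under `Δ`. -/
def dexp {X : Type} (Δ : Wt X) (f : X → ℝ) : ℝ := ∑ᶠ x, Δ x * f x

/-! ### Syntax of pCSP -/

mutual
/-- Process terms of pCSP (over prefix alphabet `A`). -/
inductive PCSP (A : Type) : Type where
  | st : SCSP A → PCSP A
  | pch : ℝ → PCSP A → PCSP A → PCSP A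
/-- State-based process terms of pCSP. -/
inductive SCSP (A : Type) : Type where
  | nil : SCSP A
  | pre : A → PCSP A → SCSP A
  | ich : PCSP A → PCSP A → SCSP A
  | ech : SCSP A → SCSP A → SCSP A
  | par : Set A → SCSP A → SCSP A → SCSP A
end

mutual
/-- Well-formedness: all probabilistic choices have `p ∈ (0,1)`.  `pCSP` proper
consists of the well-formed terms. -/
inductive PWF : {A : Type} → PCSP A → Prop where
  | st {A} {s : SCSP A} : SWF s → PWF (.st s)
  | pch {A} {p : ℝ} {P Q : PCSP A} : 0 < p → p < 1 → PWF P → PWF Q → PWF (.pch p P Q)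
inductive SWF : {A : Type} → SCSP A → Prop where
  | nil {A} : SWF (SCSP.nil (A := A))
  | pre {A} {a : A} {P} : PWF P → SWF (.pre a P)
  | ich {A} {P Q : PCSP A} : PWF P → PWF Q → SWF (.ich P Q)
  | ech {A} {s t : SCSP A} : SWF s → SWF t → SWF (.ech s t)
  | par {A} {B : Set A} {s t : SCSP A} : SWF s → SWF t → SWF (.par B s t)
end

/-- Interpretation of process terms as distributions over state-based terms. -/
def PCSP.interp {A : Type} : PCSP A → Wt (SCSP A)
  | .st s => dirac s
  | .pch p P Q => fun t => p * P.interp t + (1 - p) * Q.interp t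

/-! ### Operational semantics -/

/-- The probabilistic labelled transition relation; `none` is the internal action τ. -/
inductive Step {A : Type} : SCSP A → Option A → Wt (SCSP A) → Prop where
  | pre (a : A) (P : PCSP A) : Step (.pre a P) (some a) P.interp
  | ichL (P Q : PCSP A) : Step (.ich P Q) none P.interp
  | ichR (P Q : PCSP A) : Step (.ich P Q) none Q.interp
  | echL {s₁ s₂ : SCSP A} {a : A} {Δ} :
      Step s₁ (some a) Δ → Step (.ech s₁ s₂) (some a) Δ
  | echR {s₁ s₂ : SCSP A} {a : A} {Δ} :
      Step s₂ (some a) Δ → Step (.ech s₁ s₂) (some a) Δ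
  | echTL {s₁ s₂ : SCSP A} {Δ} :
      Step s₁ none Δ → Step (.ech s₁ s₂) none (dmap (fun t => .ech t s₂) Δ)
  | echTR {s₁ s₂ : SCSP A} {Δ} :
      Step s₂ none Δ → Step (.ech s₁ s₂) none (dmap (fun t => .ech s₁ t) Δ)
  | parL {B : Set A} {s₁ s₂ : SCSP A} {α : Option A} {Δ} :
      Step s₁ α Δ → (∀ a, α = some a → a ∉ B) →
      Step (.par B s₁ s₂) α (dmap (fun t => .par B t s₂) Δ)
  | parR {B : Set A} {s₁ s₂ : SCSP A} {α : Option A} {Δ} :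
      Step s₂ α Δ → (∀ a, α = some a → a ∉ B) →
      Step (.par B s₁ s₂) α (dmap (fun t => .par B s₁ t) Δ)
  | parS {B : Set A} {s₁ s₂ : SCSP A} {a : A} {Δ₁ Δ₂} :
      a ∈ B → Step s₁ (some a) Δ₁ → Step s₂ (some a) Δ₂ →
      Step (.par B s₁ s₂) none
        (dmap (fun q : SCSP A × SCSP A => .par B q.1 q.2) (fun q => Δ₁ q.1 * Δ₂ q.2))

/-! ### Lifting relations to distributions, weak transitions -/

/-- Lifting of a state-vs-distribution relation to distributions. -/
def Lift {A : Type} (R : SCSP A → Wt (SCSP A) → Prop) (Δ Θ : Wt (SCSP A)) : Prop :=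
  ∃ (n : ℕ) (p : Fin n → ℝ) (s : Fin n → SCSP A) (Φ : Fin n → Wt (SCSP A)),
    (∀ i, 0 ≤ p i) ∧ (∑ i, p i = 1) ∧
    (Δ = fun t => ∑ i, p i * dirac (s i) t) ∧
    (∀ i, R (s i) (Φ i)) ∧
    (Θ = fun t => ∑ i, p i * Φ i t)

/-- The transition relation lifted to distributions. -/
def StepD {A : Type} (α : Option A) : Wt (SCSP A) → Wt (SCSP A) → Prop :=
  Lift (fun s Δ => Step s α Δ)

/-- `s --τ̂--> Δ` : a τ-step or staying put. -/
def stepTauHat {A : Type} (s : SCSP A) (Δ : Wt (SCSP A)) : Prop :=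
  Step s none Δ ∨ Δ = dirac s

/-- `==τ̂==>` : reflexive-transitive closure of the lifted `--τ̂-->`. -/
def TauStar {A : Type} : Wt (SCSP A) → Wt (SCSP A) → Prop :=
  Relation.ReflTransGen (Lift stepTauHat)

/-- `Δ ==â==> Θ` for a visible action `a`. -/
def WeakA {A : Type} (a : A) (Δ Θ : Wt (SCSP A)) : Prop :=
  ∃ Δ₁ Δ₂, TauStar Δ Δ₁ ∧ StepD (some a) Δ₁ Δ₂ ∧ TauStar Δ₂ Θ

/-- `Δ ==α̂==> Θ`, which is `==τ̂==>` when `α = τ`. -/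
def Weak {A : Type} : Option A → Wt (SCSP A) → Wt (SCSP A) → Prop
  | none => TauStar
  | some a => WeakA a

/-- `s ↛X` : the state `s` enables no action from `X ∪ {τ}`. -/
def SRefuses {A : Type} (s : SCSP A) (X : Set A) : Prop :=
  (∀ Δ, ¬ Step s none Δ) ∧ ∀ a ∈ X, ∀ Δ, ¬ Step s (some a) Δ

/-- `Δ ↛X` : every state in the support of `Δ` refuses `X`. -/
def DRefuses {A : Type} (Δ : Wt (SCSP A)) (X : Set A) : Prop :=
  ∀ s ∈ dsupp Δ, SRefuses s X

/-! ### Simulation and failure simulation -/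

/-- `R` is a simulation. -/
def IsSimulation {A : Type} (R : SCSP A → Wt (SCSP A) → Prop) : Prop :=
  ∀ s Θ α Δ, R s Θ → Step s α Δ → ∃ Θ', Weak α Θ Θ' ∧ Lift R Δ Θ'

/-- `R` is a failure simulation. -/
def IsFailureSim {A : Type} (R : SCSP A → Wt (SCSP A) → Prop) : Prop :=
  IsSimulation R ∧
  ∀ s Θ (X : Set A), R s Θ → SRefuses s X → ∃ Θ', TauStar Θ Θ' ∧ DRefuses Θ' X

/-- `s ⊲_S Θ`. -/
def simLE {A : Type} (s : SCSP A) (Θ : Wt (SCSP A)) : Prop :=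
  ∃ R, IsSimulation R ∧ R s Θ

/-- `s ⊲_FS Θ`. -/
def fsimLE {A : Type} (s : SCSP A) (Θ : Wt (SCSP A)) : Prop :=
  ∃ R, IsFailureSim R ∧ R s Θ

/-- The simulation preorder `P ⊑_S Q`. -/
def SimPre {A : Type} (P Q : PCSP A) : Prop :=
  ∃ Θ, TauStar Q.interp Θ ∧ Lift simLE P.interp Θ

/-- The failure simulation preorder `P ⊑_FS Q`. -/
def FSimPre {A : Type} (P Q : PCSP A) : Prop :=
  ∃ Θ, TauStar P.interp Θ ∧ Lift fsimLE Q.interp Θ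
/-! ### Syntactic operations: renaming, and ◻ / ∥ distributed over probabilistic choice -/

mutual
/-- Renaming of actions in a process term. -/
def mapP {A B : Type} (f : A → B) : PCSP A → PCSP B
  | .st s => .st (mapS f s)
  | .pch p P Q => .pch p (mapP f P) (mapP f Q)
def mapS {A B : Type} (f : A → B) : SCSP A → SCSP B
  | .nil => .nil
  | .pre a P => .pre (f a) (mapP f P)
  | .ich P Q => .ich (mapP f P) (mapP f Q)
  | .ech s t => .ech (mapS f s) (mapS f t)
  | .par X s t => .par (f '' X) (mapS f s) (mapS f t)
end

/-- `s ∥_B Q` for a state `s`, distributing over probabilistic choice. -/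
def parCS {A : Type} (B : Set A) (s : SCSP A) : PCSP A → PCSP A
  | .st t => .st (.par B s t)
  | .pch p Q₁ Q₂ => .pch p (parCS B s Q₁) (parCS B s Q₂)

/-- `P ∥_B Q` on processes, distributing over probabilistic choice. -/
def parC {A : Type} (B : Set A) : PCSP A → PCSP A → PCSP A
  | .st s, Q => parCS B s Q
  | .pch p P₁ P₂, Q => .pch p (parC B P₁ Q) (parC B P₂ Q)

/-- `s ◻ Q` for a state `s`, distributing over probabilistic choice. -/
def echCS {A : Type} (s : SCSP A) : PCSP A → PCSP A
  | .st t => .st (.ech s t)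
  | .pch p Q₁ Q₂ => .pch p (echCS s Q₁) (echCS s Q₂)

/-- `P ◻ Q` on processes, distributing over probabilistic choice. -/
def echC {A : Type} : PCSP A → PCSP A → PCSP A
  | .st s, Q => echCS s Q
  | .pch p P₁ P₂, Q => .pch p (echC P₁ Q) (echC P₂ Q)

/-- Finite (nonempty) indexed internal choice `⨅_{i} P i`. -/
def ichFin {A : Type} : (n : ℕ) → (Fin (n+1) → PCSP A) → PCSP A
  | 0, P => P 0
  | n+1, P => .st (.ich (P 0) (ichFin n (fun i => P i.succ)))

/-- Finite (nonempty) indexed probabilistic choice `⊕_{i} p i · P i`. -/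
def pchFin {A : Type} : (n : ℕ) → (Fin (n+1) → ℝ) → (Fin (n+1) → PCSP A) → PCSP A
  | 0, _, P => P 0
  | n+1, p, P => .pch (p 0) (P 0)
      (pchFin n (fun i => p i.succ / (1 - p 0)) (fun i => P i.succ))

/-- Finite (nonempty) indexed external choice of states `◻_{i} s i`. -/
def echFin {A : Type} : (n : ℕ) → (Fin (n+1) → SCSP A) → SCSP A
  | 0, s => s 0
  | n+1, s => .ech (s 0) (echFin n (fun i => s i.succ))

/-- External choice of a list of states (empty list gives `0`). -/
def echList {A : Type} : List (SCSP A) → SCSP A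
  | [] => .nil
  | s :: l => .ech s (echList l)

/-! ### State-based scalar testing -/

/-- The alphabet `Act ∪ {ω}` for ordinary (scalar) tests. -/
abbrev TAct (A : Type) := Sum A Unit

/-- The success action ω. -/
def omA {A : Type} : TAct A := Sum.inr ()

/-- Membership in the state-based results-gathering function `V` (with success action `w`). -/
inductive VMem {B : Type} (w : B) : SCSP B → ℝ → Prop where
  | succ {s : SCSP B} {Δ} : Step s (some w) Δ → VMem w s 1
  | step {s : SCSP B} {α : Option B} {Δ} (f : SCSP B → ℝ) :
      (∀ Θ, ¬ Step s (some w) Θ) → Step s α Δ →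
      (∀ t ∈ dsupp Δ, VMem w t (f t)) → VMem w s (dexp Δ f)
  | stuck {s : SCSP B} : (∀ α Δ, ¬ Step s α Δ) → VMem w s 0

/-- `V(Δ)` : the set of outcomes of a distribution, via choice functions. -/
def VD {B : Type} (w : B) (Δ : Wt (SCSP B)) : Set ℝ :=
  {r | ∃ f : SCSP B → ℝ, (∀ t ∈ dsupp Δ, VMem w t (f t)) ∧ r = dexp Δ f}

/-- The application `T ∥_Act P` of a test to a process. -/
def applyTest {A : Type} (T : PCSP (TAct A)) (P : PCSP A) : PCSP (TAct A) :=
  parC (Set.range Sum.inl) T (mapP Sum.inl P)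

/-- `A(T,P)` : state-based testing outcomes. -/
def Aset {A : Type} (T : PCSP (TAct A)) (P : PCSP A) : Set ℝ :=
  VD omA (applyTest T P).interp

/-- The Hoare preorder on sets of reals. -/
def HoareLE (X Y : Set ℝ) : Prop := ∀ x ∈ X, ∃ y ∈ Y, x ≤ y

/-- The Smyth preorder on sets of reals. -/
def SmythLE (X Y : Set ℝ) : Prop := ∀ y ∈ Y, ∃ x ∈ X, x ≤ y

/-- The may-testing preorder `⊑_pmay`. -/
def PMay {A : Type} (P Q : PCSP A) : Prop :=
  ∀ T : PCSP (TAct A), PWF T → HoareLE (Aset T P) (Aset T Q)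

/-- The must-testing preorder `⊑_pmust`. -/
def PMust {A : Type} (P Q : PCSP A) : Prop :=
  ∀ T : PCSP (TAct A), PWF T → SmythLE (Aset T P) (Aset T Q)

/-! ### Action-based scalar testing -/

/-- Membership in the action-based results-gathering function `V̄`. -/
inductive VBarMem {B : Type} (w : B) : SCSP B → ℝ → Prop where
  | succ {s : SCSP B} {Δ} : Step s (some w) Δ → VBarMem w s 1
  | step {s : SCSP B} {α : Option B} {Δ} (f : SCSP B → ℝ) :
      α ≠ some w → Step s α Δ →
      (∀ t ∈ dsupp Δ, VBarMem w t (f t)) → VBarMem w s (dexp Δ f)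
  | stuck {s : SCSP B} : (∀ α Δ, ¬ Step s α Δ) → VBarMem w s 0

/-- `V̄(Δ)`. -/
def VBarD {B : Type} (w : B) (Δ : Wt (SCSP B)) : Set ℝ :=
  {r | ∃ f : SCSP B → ℝ, (∀ t ∈ dsupp Δ, VBarMem w t (f t)) ∧ r = dexp Δ f}

/-- `Ā(T,P)` : action-based testing outcomes. -/
def AsetBar {A : Type} (T : PCSP (TAct A)) (P : PCSP A) : Set ℝ :=
  VBarD omA (applyTest T P).interp

/-- The action-based may-testing preorder `⊑̄_pmay`. -/
def PMayBar {A : Type} (P Q : PCSP A) : Prop :=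
  ∀ T : PCSP (TAct A), PWF T → HoareLE (AsetBar T P) (AsetBar T Q)

/-- The action-based must-testing preorder `⊑̄_pmust`. -/
def PMustBar {A : Type} (P Q : PCSP A) : Prop :=
  ∀ T : PCSP (TAct A), PWF T → SmythLE (AsetBar T P) (AsetBar T Q)
/-! ### ω-avoiding transitions and the relation ⊲ᵉ_FS -/

/-- `s --α-->_ω Δ` : a transition from a state not enabling the success action `w`. -/
def StepOmega {B : Type} (w : B) (s : SCSP B) (α : Option B) (Δ : Wt (SCSP B)) : Prop :=
  (∀ Θ, ¬ Step s (some w) Θ) ∧ Step s α Δ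

/-- `s --τ̂-->_ω Δ`. -/
def stepTauHatOm {B : Type} (w : B) (s : SCSP B) (Δ : Wt (SCSP B)) : Prop :=
  StepOmega w s none Δ ∨ Δ = dirac s

/-- `==τ̂==>_ω`. -/
def TauStarOm {B : Type} (w : B) : Wt (SCSP B) → Wt (SCSP B) → Prop :=
  Relation.ReflTransGen (Lift (stepTauHatOm w))

/-- `==â==>_ω` for a visible action `a`. -/
def WeakAOm {B : Type} (w : B) (a : B) (Δ Θ : Wt (SCSP B)) : Prop :=
  ∃ Δ₁ Δ₂, TauStarOm w Δ Δ₁ ∧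
    Lift (fun s Φ => StepOmega w s (some a) Φ) Δ₁ Δ₂ ∧ TauStarOm w Δ₂ Θ

/-- `==α̂==>_ω`. -/
def WeakOm {B : Type} (w : B) : Option B → Wt (SCSP B) → Wt (SCSP B) → Prop
  | none => TauStarOm w
  | some a => WeakAOm w a

/-- A postfixed point for the coinductive definition of `⊲ᵉ_FS`. -/
def IsEFailSim {B : Type} (w : B) (R : SCSP B → Wt (SCSP B) → Prop) : Prop :=
  (∀ s Θ α Δ, R s Θ → StepOmega w s α Δ → ∃ Θ', WeakOm w α Θ Θ' ∧ Lift R Δ Θ') ∧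
  (∀ s Θ (X : Set B), R s Θ → w ∈ X → SRefuses s X →
    ∃ Θ', TauStarOm w Θ Θ' ∧ DRefuses Θ' X)

/-- `s ⊲ᵉ_FS Θ` : the largest relation satisfying the transfer properties. -/
def efsimLE {B : Type} (w : B) (s : SCSP B) (Θ : Wt (SCSP B)) : Prop :=
  ∃ R, IsEFailSim w R ∧ R s Θ

/-! ### Vector-based testing with success actions from Ω -/

/-- `α!o` : update the `α`-component of the outcome tuple to 1 if `α` is a success action. -/
def bang {A Om : Type} (α : Option (Sum A Om)) (o : Om → ℝ) : Om → ℝ :=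
  fun w => if α = some (Sum.inr w) then 1 else o w

mutual
/-- Membership in the vector-based convex-closed results-gathering function `V̄↕^Ω`
for states.  -/
inductive WMem : {A Om : Type} → SCSP (Sum A Om) → (Om → ℝ) → Prop where
  | stuck {A Om : Type} {s : SCSP (Sum A Om)} :
      (∀ α Δ, ¬ Step s α Δ) → WMem s (fun _ => 0)
  | step {A Om : Type} {s : SCSP (Sum A Om)} {n : ℕ}
      (p : Fin (n+1) → ℝ) (α : Fin (n+1) → Option (Sum A Om))
      (Δ : Fin (n+1) → Wt (SCSP (Sum A Om))) (o : Fin (n+1) → Om → ℝ) :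
      (∀ i, 0 ≤ p i) → (∑ i, p i = 1) →
      (∀ i, Step s (α i) (Δ i)) →
      (∀ i, WMemD (Δ i) (o i)) →
      WMem s (fun w => ∑ i, p i * bang (α i) (o i) w)
/-- Membership in `V̄↕^Ω` for distributions. -/
inductive WMemD : {A Om : Type} → Wt (SCSP (Sum A Om)) → (Om → ℝ) → Prop where
  | mk {A Om : Type} {Δ : Wt (SCSP (Sum A Om))} (f : SCSP (Sum A Om) → Om → ℝ) :
      (∀ t ∈ dsupp Δ, WMem t (f t)) → WMemD Δ (fun w => ∑ᶠ t, Δ t * f t w)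
end

/-- `V̄↕^Ω(Δ)` as a set of outcome tuples. -/
def WsetD {A Om : Type} (Δ : Wt (SCSP (Sum A Om))) : Set (Om → ℝ) :=
  {o | WMemD Δ o}

/-- The application `T ∥_Act P` of an Ω-test to a process. -/
def applyTestO {A Om : Type} (T : PCSP (Sum A Om)) (P : PCSP A) : PCSP (Sum A Om) :=
  parC (Set.range Sum.inl) T (mapP Sum.inl P)

/-- `A↕^Ω(T,P)` : vector-based testing outcomes of a process. -/
def AO {A Om : Type} (T : PCSP (Sum A Om)) (P : PCSP A) : Set (Om → ℝ) :=
  WsetD (applyTestO T P).interp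

/-- `A↕^Ω(T,Δ)` for a distribution `Δ ∈ D(sCSP)`, via expected values. -/
def AOD {A Om : Type} (T : PCSP (Sum A Om)) (Δ : Wt (SCSP A)) : Set (Om → ℝ) :=
  {o | ∃ g : SCSP A → Om → ℝ,
    (∀ s ∈ dsupp Δ, g s ∈ AO T (.st s)) ∧ o = fun w => ∑ᶠ s, Δ s * g s w}

/-- Hoare preorder on sets of outcome tuples (componentwise order). -/
def HoareLEV {Om : Type} (X Y : Set (Om → ℝ)) : Prop := ∀ x ∈ X, ∃ y ∈ Y, x ≤ y

/-- Smyth preorder on sets of outcome tuples (componentwise order). -/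
def SmythLEV {Om : Type} (X Y : Set (Om → ℝ)) : Prop := ∀ y ∈ Y, ∃ x ∈ X, x ≤ y

/-- The vector-based may-testing preorder `⊑̄^Ω_pmay`. -/
def PMayO {A : Type} (Om : Type) (P Q : PCSP A) : Prop :=
  ∀ T : PCSP (Sum A Om), PWF T → HoareLEV (AO T P) (AO T Q)

/-- The vector-based must-testing preorder `⊑̄^Ω_pmust`. -/
def PMustO {A : Type} (Om : Type) (P Q : PCSP A) : Prop :=
  ∀ T : PCSP (Sum A Om), PWF T → SmythLEV (AO T P) (AO T Q)

/-- The unit outcome vector `ω⃗`. -/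
def unitVec {Om : Type} (w : Om) : Om → ℝ := fun w' => if w' = w then 1 else 0

/-! Occurrence of an action in a process term. -/
mutual
/-- Occurrence of an action in a process term. -/
inductive PUses : {B : Type} → B → PCSP B → Prop where
  | st {B : Type} {b : B} {s} : SUses b s → PUses b (.st s)
  | pchL {B : Type} {b : B} {p P Q} : PUses b P → PUses b (.pch p P Q)
  | pchR {B : Type} {b : B} {p P Q} : PUses b Q → PUses b (.pch p P Q)
inductive SUses : {B : Type} → B → SCSP B → Prop where
  | preAct {B : Type} {b : B} {P} : SUses b (.pre b P)
  | pre {B : Type} {b : B} {a P} : PUses b P → SUses b (.pre a P)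
  | ichL {B : Type} {b : B} {P Q} : PUses b P → SUses b (.ich P Q)
  | ichR {B : Type} {b : B} {P Q} : PUses b Q → SUses b (.ich P Q)
  | echL {B : Type} {b : B} {s t} : SUses b s → SUses b (.ech s t)
  | echR {B : Type} {b : B} {s t} : SUses b t → SUses b (.ech s t)
  | parSet {B : Type} {b : B} {X s t} : b ∈ X → SUses b (.par X s t)
  | parL {B : Type} {b : B} {X s t} : SUses b s → SUses b (.par X s t)
  | parR {B : Type} {b : B} {X s t} : SUses b t → SUses b (.par X s t)
end
/-! ### The modal logic F -/

/-- Modal formulae of the logic `F`. -/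
inductive Form (A : Type) : Type where
  | ref : Set A → Form A
  | dia : A → Form A → Form A
  | conj : (n : ℕ) → (Fin n → Form A) → Form A
  | prob : (n : ℕ) → (Fin n → ℝ) → (Fin n → Form A) → Form A

/-- Well-formed formulae: probabilistic choices carry genuine distributions. -/
inductive WFF {A : Type} : Form A → Prop where
  | ref {X} : WFF (.ref X)
  | dia {a φ} : WFF φ → WFF (.dia a φ)
  | conj {n φs} : (∀ i, WFF (φs i)) → WFF (.conj n φs)
  | prob {n p φs} : (∀ i, 0 ≤ p i) → (∑ i, p i = 1) →
      (∀ i, WFF (φs i)) → WFF (.prob n p φs)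

/-- Formulae of the sublogic `L`: no refusal construct. -/
inductive NoRef {A : Type} : Form A → Prop where
  | dia {a φ} : NoRef φ → NoRef (.dia a φ)
  | conj {n φs} : (∀ i, NoRef (φs i)) → NoRef (.conj n φs)
  | prob {n p φs} : (∀ i, NoRef (φs i)) → NoRef (.prob n p φs)

/-- The satisfaction relation `Δ ⊨ φ`. -/
inductive Sat {A : Type} : Form A → Wt (SCSP A) → Prop where
  | ref {X : Set A} {Δ Δ'} : TauStar Δ Δ' → DRefuses Δ' X → Sat (.ref X) Δ
  | dia {a φ Δ Δ'} : WeakA a Δ Δ' → Sat φ Δ' → Sat (.dia a φ) Δ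
  | conj {n φs Δ} : (∀ i, Sat (φs i) Δ) → Sat (.conj n φs) Δ
  | prob {n} {p : Fin n → ℝ} {φs Δ} (Δs : Fin n → Wt (SCSP A)) :
      (∀ i, Sat (φs i) (Δs i)) →
      TauStar Δ (fun t => ∑ i, p i * Δs i t) →
      Sat (.prob n p φs) Δ

/-- The logical preorder `⊑^L`. -/
def LPre {A : Type} (P Q : PCSP A) : Prop :=
  ∀ φ : Form A, WFF φ → NoRef φ → Sat φ P.interp → Sat φ Q.interp

/-- The logical preorder `⊑^F`. -/
def FPre {A : Type} (P Q : PCSP A) : Prop :=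
  ∀ φ : Form A, WFF φ → Sat φ Q.interp → Sat φ P.interp

mutual
/-- `CharS s φ` : `φ` is an F-characteristic formula `φ_s` of the state `s`. -/
inductive CharS : {A : Type} → SCSP A → Form A → Prop where
  | noTau {A : Type} {s : SCSP A} (n : ℕ) (a : Fin n → A)
      (Δ : Fin n → Wt (SCSP A)) (φ : Fin n → Form A) :
      (∀ Θ, ¬ Step s none Θ) →
      (∀ i, Step s (some (a i)) (Δ i)) →
      (∀ b Θ, Step s (some b) Θ → ∃ i, a i = b ∧ Δ i = Θ) →
      (∀ i, CharD (Δ i) (φ i)) →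
      CharS s (.conj (n+1) (Fin.snoc (fun i => .dia (a i) (φ i))
        (.ref {b : A | ∀ Θ, ¬ Step s (some b) Θ})))
  | tau {A : Type} {s : SCSP A} (n m : ℕ) (a : Fin n → A)
      (Δ : Fin n → Wt (SCSP A)) (φ : Fin n → Form A)
      (Θs : Fin m → Wt (SCSP A)) (ψ : Fin m → Form A) :
      (∃ Θ, Step s none Θ) →
      (∀ i, Step s (some (a i)) (Δ i)) →
      (∀ b Θ, Step s (some b) Θ → ∃ i, a i = b ∧ Δ i = Θ) →
      (∀ j, Step s none (Θs j)) →
      (∀ Θ, Step s none Θ → ∃ j, Θs j = Θ) →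
      (∀ i, CharD (Δ i) (φ i)) →
      (∀ j, CharD (Θs j) (ψ j)) →
      CharS s (.conj (n+m) (Fin.append (fun i => .dia (a i) (φ i)) ψ))
/-- `CharD Δ φ` : `φ` is an F-characteristic formula `φ_Δ` of the distribution `Δ`. -/
inductive CharD : {A : Type} → Wt (SCSP A) → Form A → Prop where
  | mk {A : Type} {Δ : Wt (SCSP A)} (n : ℕ) (s : Fin n → SCSP A) (φ : Fin n → Form A) :
      Function.Injective s →
      (∀ i, s i ∈ dsupp Δ) →
      (∀ t ∈ dsupp Δ, ∃ i, s i = t) →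
      (∀ i, CharS (s i) (φ i)) →
      CharD Δ (.prob n (fun i => Δ (s i)) φ)
end

mutual
/-- `CharSL s ψ` : `ψ` is an L-characteristic formula `ψ_s` of the state `s`. -/
inductive CharSL : {A : Type} → SCSP A → Form A → Prop where
  | noTau {A : Type} {s : SCSP A} (n : ℕ) (a : Fin n → A)
      (Δ : Fin n → Wt (SCSP A)) (φ : Fin n → Form A) :
      (∀ Θ, ¬ Step s none Θ) →
      (∀ i, Step s (some (a i)) (Δ i)) →
      (∀ b Θ, Step s (some b) Θ → ∃ i, a i = b ∧ Δ i = Θ) →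
      (∀ i, CharDL (Δ i) (φ i)) →
      CharSL s (.conj n (fun i => .dia (a i) (φ i)))
  | tau {A : Type} {s : SCSP A} (n m : ℕ) (a : Fin n → A)
      (Δ : Fin n → Wt (SCSP A)) (φ : Fin n → Form A)
      (Θs : Fin m → Wt (SCSP A)) (ψ : Fin m → Form A) :
      (∃ Θ, Step s none Θ) →
      (∀ i, Step s (some (a i)) (Δ i)) →
      (∀ b Θ, Step s (some b) Θ → ∃ i, a i = b ∧ Δ i = Θ) →
      (∀ j, Step s none (Θs j)) →
      (∀ Θ, Step s none Θ → ∃ j, Θs j = Θ) →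
      (∀ i, CharDL (Δ i) (φ i)) →
      (∀ j, CharDL (Θs j) (ψ j)) →
      CharSL s (.conj (n+m) (Fin.append (fun i => .dia (a i) (φ i)) ψ))
/-- `CharDL Δ ψ` : `ψ` is an L-characteristic formula `ψ_Δ` of the distribution `Δ`. -/
inductive CharDL : {A : Type} → Wt (SCSP A) → Form A → Prop where
  | mk {A : Type} {Δ : Wt (SCSP A)} (n : ℕ) (s : Fin n → SCSP A) (φ : Fin n → Form A) :
      Function.Injective s →
      (∀ i, s i ∈ dsupp Δ) →
      (∀ t ∈ dsupp Δ, ∃ i, s i = t) →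
      (∀ i, CharSL (s i) (φ i)) →
      CharDL Δ (.prob n (fun i => Δ (s i)) φ)
end
/-! ### The sub-language nCSP and (in)equational theories -/

mutual
/-- Membership in `nCSP`: no parallel composition. -/
inductive PNoPar : {A : Type} → PCSP A → Prop where
  | st {A : Type} {s : SCSP A} : SNoPar s → PNoPar (.st s)
  | pch {A : Type} {p : ℝ} {P Q : PCSP A} : PNoPar P → PNoPar Q → PNoPar (.pch p P Q)
inductive SNoPar : {A : Type} → SCSP A → Prop where
  | nil {A : Type} : SNoPar (SCSP.nil (A := A))
  | pre {A : Type} {a : A} {P} : PNoPar P → SNoPar (.pre a P)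
  | ich {A : Type} {P Q : PCSP A} : PNoPar P → PNoPar Q → SNoPar (.ich P Q)
  | ech {A : Type} {s t : SCSP A} : SNoPar s → SNoPar t → SNoPar (.ech s t)
end

/-- Initial actions of a state-based term (`none` denotes τ). -/
def initsS {A : Type} : SCSP A → Set (Option A)
  | .nil => ∅
  | .pre a _ => {some a}
  | .ich _ _ => {none}
  | .ech s t => initsS s ∪ initsS t
  | .par _ s t => initsS s ∪ initsS t

/-- Initial actions of a process term. -/
def initsP {A : Type} : PCSP A → Set (Option A)
  | .st s => initsS s
  | .pch _ P Q => initsP P ∪ initsP Q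

/-- Derivability in the equational theory `=_E` of Figure 3. -/
inductive EqE {A : Type} : PCSP A → PCSP A → Prop where
  | refl (P) : EqE P P
  | symm {P Q} : EqE P Q → EqE Q P
  | trans {P Q R} : EqE P Q → EqE Q R → EqE P R
  | congPre (a : A) {P Q} : EqE P Q → EqE (.st (.pre a P)) (.st (.pre a Q))
  | congIch {P₁ P₂ Q₁ Q₂} : EqE P₁ Q₁ → EqE P₂ Q₂ →
      EqE (.st (.ich P₁ P₂)) (.st (.ich Q₁ Q₂))
  | congEch {P₁ P₂ Q₁ Q₂} : EqE P₁ Q₁ → EqE P₂ Q₂ →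
      EqE (echC P₁ P₂) (echC Q₁ Q₂)
  | congPch (p : ℝ) {P₁ P₂ Q₁ Q₂} : EqE P₁ Q₁ → EqE P₂ Q₂ →
      EqE (.pch p P₁ P₂) (.pch p Q₁ Q₂)
  | P1 (p : ℝ) (h₀ : 0 < p) (h₁ : p < 1) (P) : EqE (.pch p P P) P
  | P2 (p : ℝ) (h₀ : 0 < p) (h₁ : p < 1) (P Q) :
      EqE (.pch p P Q) (.pch (1-p) Q P)
  | P3 (p q : ℝ) (hp₀ : 0 < p) (hp₁ : p < 1) (hq₀ : 0 < q) (hq₁ : q < 1) (P Q R) :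
      EqE (.pch q (.pch p P Q) R)
          (.pch (p*q) P (.pch ((1-p)*q/(1-p*q)) Q R))
  | I1 (P) : EqE (.st (.ich P P)) P
  | I2 (P Q) : EqE (.st (.ich P Q)) (.st (.ich Q P))
  | I3 (P Q R) : EqE (.st (.ich (.st (.ich P Q)) R)) (.st (.ich P (.st (.ich Q R))))
  | E1 (P) : EqE (echC P (.st .nil)) P
  | E2 (P Q) : EqE (echC P Q) (echC Q P)
  | E3 (P Q R) : EqE (echC (echC P Q) R) (echC P (echC Q R))
  | EI (a : A) (P Q) :
      EqE (echC (.st (.pre a P)) (.st (.pre a Q)))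
          (.st (.ich (.st (.pre a P)) (.st (.pre a Q))))
  | D1 (p : ℝ) (h₀ : 0 < p) (h₁ : p < 1) (P Q R) :
      EqE (echC P (.pch p Q R)) (.pch p (echC P Q) (echC P R))
  | D2 (a : A) (P Q R) :
      EqE (echC (.st (.pre a P)) (.st (.ich Q R)))
          (.st (.ich (echC (.st (.pre a P)) Q) (echC (.st (.pre a P)) R)))
  | D3 (P₁ P₂ Q₁ Q₂) :
      EqE (echC (.st (.ich P₁ P₂)) (.st (.ich Q₁ Q₂)))
          (.st (.ich
            (.st (.ich (echC P₁ (.st (.ich Q₁ Q₂))) (echC P₂ (.st (.ich Q₁ Q₂)))))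
            (.st (.ich (echC (.st (.ich P₁ P₂)) Q₁) (echC (.st (.ich P₁ P₂)) Q₂)))))

/-- Derivability from the probabilistic axioms P1–P3 and D1 only (`=_prob`). -/
inductive EqProb {A : Type} : PCSP A → PCSP A → Prop where
  | refl (P) : EqProb P P
  | symm {P Q} : EqProb P Q → EqProb Q P
  | trans {P Q R} : EqProb P Q → EqProb Q R → EqProb P R
  | congPre (a : A) {P Q} : EqProb P Q → EqProb (.st (.pre a P)) (.st (.pre a Q))
  | congIch {P₁ P₂ Q₁ Q₂} : EqProb P₁ Q₁ → EqProb P₂ Q₂ →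
      EqProb (.st (.ich P₁ P₂)) (.st (.ich Q₁ Q₂))
  | congEch {P₁ P₂ Q₁ Q₂} : EqProb P₁ Q₁ → EqProb P₂ Q₂ →
      EqProb (echC P₁ P₂) (echC Q₁ Q₂)
  | congPch (p : ℝ) {P₁ P₂ Q₁ Q₂} : EqProb P₁ Q₁ → EqProb P₂ Q₂ →
      EqProb (.pch p P₁ P₂) (.pch p Q₁ Q₂)
  | P1 (p : ℝ) (h₀ : 0 < p) (h₁ : p < 1) (P) : EqProb (.pch p P P) P
  | P2 (p : ℝ) (h₀ : 0 < p) (h₁ : p < 1) (P Q) :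
      EqProb (.pch p P Q) (.pch (1-p) Q P)
  | P3 (p q : ℝ) (hp₀ : 0 < p) (hp₁ : p < 1) (hq₀ : 0 < q) (hq₁ : q < 1) (P Q R) :
      EqProb (.pch q (.pch p P Q) R)
          (.pch (p*q) P (.pch ((1-p)*q/(1-p*q)) Q R))
  | D1 (p : ℝ) (h₀ : 0 < p) (h₁ : p < 1) (P Q R) :
      EqProb (echC P (.pch p Q R)) (.pch p (echC P Q) (echC P R))

mutual
/-- Normal forms. -/
inductive IsNF : {A : Type} → PCSP A → Prop where
  | pch {A : Type} {p : ℝ} {N₁ N₂ : PCSP A} : 0 < p → p < 1 →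
      IsNF N₁ → IsNF N₂ → IsNF (.pch p N₁ N₂)
  | ich {A : Type} {N₁ N₂ : PCSP A} : IsNF N₁ → IsNF N₂ → IsNF (.st (.ich N₁ N₂))
  | ext {A : Type} {s : SCSP A} : IsExtNF s → IsNF (.st s)
/-- External-choice normal forms `◻_{i∈I} a_i.N_i`. -/
inductive IsExtNF : {A : Type} → SCSP A → Prop where
  | nil {A : Type} : IsExtNF (SCSP.nil (A := A))
  | pre {A : Type} {a : A} {N} : IsNF N → IsExtNF (.pre a N)
  | ech {A : Type} {s t : SCSP A} : IsExtNF s → IsExtNF t → IsExtNF (.ech s t)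
end

/-- Derivability in the inequational theory for may testing (`⊑_Emay`). -/
inductive LeMay {A : Type} : PCSP A → PCSP A → Prop where
  | ofEq {P Q} : EqE P Q → LeMay P Q
  | trans {P Q R} : LeMay P Q → LeMay Q R → LeMay P R
  | congPre (a : A) {P Q} : LeMay P Q → LeMay (.st (.pre a P)) (.st (.pre a Q))
  | congIch {P₁ P₂ Q₁ Q₂} : LeMay P₁ Q₁ → LeMay P₂ Q₂ →
      LeMay (.st (.ich P₁ P₂)) (.st (.ich Q₁ Q₂))
  | congEch {P₁ P₂ Q₁ Q₂} : LeMay P₁ Q₁ → LeMay P₂ Q₂ →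
      LeMay (echC P₁ P₂) (echC Q₁ Q₂)
  | congPch (p : ℝ) {P₁ P₂ Q₁ Q₂} : LeMay P₁ Q₁ → LeMay P₂ Q₂ →
      LeMay (.pch p P₁ P₂) (.pch p Q₁ Q₂)
  | may0 (a b : A) (P Q) :
      LeMay (echC (.st (.pre a P)) (.st (.pre b Q)))
            (.st (.ich (.st (.pre a P)) (.st (.pre b Q))))
  | may0' (a b : A) (P Q) :
      LeMay (.st (.ich (.st (.pre a P)) (.st (.pre b Q))))
            (echC (.st (.pre a P)) (.st (.pre b Q)))
  | may1 (P Q) : LeMay P (.st (.ich P Q))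
  | may2 (P) : LeMay (.st .nil) P
  | may3 (a : A) (p : ℝ) (h₀ : 0 < p) (h₁ : p < 1) (P Q) :
      LeMay (.st (.pre a (.pch p P Q))) (.pch p (.st (.pre a P)) (.st (.pre a Q)))

/-- Derivability in the inequational theory for must testing (`⊑_Emust`). -/
inductive LeMust {A : Type} : PCSP A → PCSP A → Prop where
  | ofEq {P Q} : EqE P Q → LeMust P Q
  | trans {P Q R} : LeMust P Q → LeMust Q R → LeMust P R
  | congPre (a : A) {P Q} : LeMust P Q → LeMust (.st (.pre a P)) (.st (.pre a Q))
  | congIch {P₁ P₂ Q₁ Q₂} : LeMust P₁ Q₁ → LeMust P₂ Q₂ →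
      LeMust (.st (.ich P₁ P₂)) (.st (.ich Q₁ Q₂))
  | congEch {P₁ P₂ Q₁ Q₂} : LeMust P₁ Q₁ → LeMust P₂ Q₂ →
      LeMust (echC P₁ P₂) (echC Q₁ Q₂)
  | congPch (p : ℝ) {P₁ P₂ Q₁ Q₂} : LeMust P₁ Q₁ → LeMust P₂ Q₂ →
      LeMust (.pch p P₁ P₂) (.pch p Q₁ Q₂)
  | must1 (P Q) : LeMust (.st (.ich P Q)) Q
  | must2 (n : ℕ) (a : Fin (n+1) → A) (m : Fin (n+1) → ℕ)
      (p : (i : Fin (n+1)) → Fin (m i + 1) → ℝ)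
      (Q : (i : Fin (n+1)) → Fin (m i + 1) → PCSP A)
      (P : (i : Fin (n+1)) → Fin (m i + 1) → PCSP A)
      (R : PCSP A) :
      (∀ i j, 0 ≤ p i j) → (∀ i, ∑ j, p i j = 1) →
      initsP R ⊆ {α | ∃ i, α = some (a i)} →
      LeMust
        (.st (.ich R (ichFin n (fun i =>
          pchFin (m i) (p i) (fun j => echC (.st (.pre (a i) (Q i j))) (P i j))))))
        (.st (echFin n (fun i => .pre (a i) (pchFin (m i) (p i) (Q i)))))

/-! ### Auxiliary material for the normal form theorem -/

mutual
/-- Size of a process term. -/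
def sizeP {A : Type} : PCSP A → ℕ
  | .st s => sizeS s + 1
  | .pch _ P Q => sizeP P + sizeP Q + 1
/-- Size of a state term. -/
def sizeS {A : Type} : SCSP A → ℕ
  | .nil => 0
  | .pre _ P => sizeP P + 1
  | .ich P Q => sizeP P + sizeP Q + 1
  | .ech s t => sizeS s + sizeS t + 1
  | .par _ s t => sizeS s + sizeS t + 1
end

lemma sizeP_pos {A : Type} (P : PCSP A) : 1 ≤ sizeP P := by
  cases P <;> simp only [sizeP] <;> omega

lemma echC_nil_left {A : Type} (P : PCSP A) : EqE (echC (.st .nil) P) P :=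
  (EqE.E2 _ _).trans (EqE.E1 P)

/-- Distribution of an external-choice normal form over internal choice. -/
lemma distIch {A : Type} : ∀ n : ℕ, ∀ s : SCSP A, sizeS s ≤ n → IsExtNF s →
    ∀ P Q : PCSP A,
      EqE (echC (.st s) (.st (.ich P Q)))
          (.st (.ich (echC (.st s) P) (echC (.st s) Q))) := by
  intro n
  induction n with
  | zero =>
    intro s hs hext P Q
    cases hext with
    | nil =>
      exact (echC_nil_left _).trans
        (EqE.congIch (EqE.symm (echC_nil_left P)) (EqE.symm (echC_nil_left Q)))
    | pre hN => exact EqE.D2 _ _ _ _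
    | ech h1 h2 => simp [sizeS] at hs
  | succ n ih =>
    intro s hs hext P Q
    cases hext with
    | nil =>
      exact (echC_nil_left _).trans
        (EqE.congIch (EqE.symm (echC_nil_left P)) (EqE.symm (echC_nil_left Q)))
    | pre hN => exact EqE.D2 _ _ _ _
    | @ech s₁ s₂ h1 h2 =>
      have hs1 : sizeS s₁ ≤ n := by simp only [sizeS] at hs; omega
      have hs2 : sizeS s₂ ≤ n := by simp only [sizeS] at hs; omega
      have e3 : EqE (echC (.st (.ech s₁ s₂)) (.st (.ich P Q)))
          (echC (.st s₁) (echC (.st s₂) (.st (.ich P Q)))) :=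
        EqE.E3 (.st s₁) (.st s₂) (.st (.ich P Q))
      have step2 : EqE (echC (.st s₁) (echC (.st s₂) (.st (.ich P Q))))
          (echC (.st s₁) (.st (.ich (echC (.st s₂) P) (echC (.st s₂) Q)))) :=
        EqE.congEch (EqE.refl _) (ih s₂ hs2 h2 P Q)
      have h1' := ih s₁ hs1 h1 (echC (.st s₂) P) (echC (.st s₂) Q)
      have back : EqE
          (.st (.ich (echC (.st s₁) (echC (.st s₂) P))
                     (echC (.st s₁) (echC (.st s₂) Q))))
          (.st (.ich (echC (.st (.ech s₁ s₂)) P) (echC (.st (.ech s₁ s₂)) Q))) :=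
        EqE.congIch (EqE.symm (EqE.E3 (.st s₁) (.st s₂) P))
                    (EqE.symm (EqE.E3 (.st s₁) (.st s₂) Q))
      exact e3.trans (step2.trans (h1'.trans back))

/-- External choice of two normal forms can be normalized. -/
lemma echNF {A : Type} : ∀ n : ℕ, ∀ P Q : PCSP A, sizeP P + sizeP Q ≤ n →
    IsNF P → IsNF Q → ∃ N, IsNF N ∧ EqE (echC P Q) N := by
  intro n
  induction n with
  | zero =>
    intro P Q h _ _
    have := sizeP_pos P; have := sizeP_pos Q; omega
  | succ n ih =>
    intro P Q hsz hP hQ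
    cases hP with
    | @pch p PA PB hp0 hp1 hA hB =>
      have hB1 := sizeP_pos PB
      have hA1 := sizeP_pos PA
      simp only [sizeP] at hsz
      obtain ⟨N₁, hN₁, e₁⟩ := ih PA Q (by omega) hA hQ
      obtain ⟨N₂, hN₂, e₂⟩ := ih PB Q (by omega) hB hQ
      exact ⟨.pch p N₁ N₂, IsNF.pch hp0 hp1 hN₁ hN₂, EqE.congPch p e₁ e₂⟩
    | @ich PA PB hA hB =>
      cases hQ with
      | @pch q QC QD hq0 hq1 hC hD =>
        have h1 := sizeP_pos QC; have h2 := sizeP_pos QD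
        simp only [sizeP, sizeS] at hsz
        obtain ⟨N₁, hN₁, e₁⟩ :=
          ih (.st (.ich PA PB)) QC (by simp only [sizeP, sizeS]; omega)
            (IsNF.ich hA hB) hC
        obtain ⟨N₂, hN₂, e₂⟩ :=
          ih (.st (.ich PA PB)) QD (by simp only [sizeP, sizeS]; omega)
            (IsNF.ich hA hB) hD
        exact ⟨.pch q N₁ N₂, IsNF.pch hq0 hq1 hN₁ hN₂, EqE.congPch q e₁ e₂⟩
      | @ich QC QD hC hD =>
        have h1 := sizeP_pos QC; have h2 := sizeP_pos QD
        have h3 := sizeP_pos PA; have h4 := sizeP_pos PB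
        simp only [sizeP, sizeS] at hsz
        obtain ⟨N₁, hN₁, e₁⟩ :=
          ih PA (.st (.ich QC QD)) (by simp only [sizeP, sizeS]; omega)
            hA (IsNF.ich hC hD)
        obtain ⟨N₂, hN₂, e₂⟩ :=
          ih PB (.st (.ich QC QD)) (by simp only [sizeP, sizeS]; omega)
            hB (IsNF.ich hC hD)
        obtain ⟨N₃, hN₃, e₃⟩ :=
          ih (.st (.ich PA PB)) QC (by simp only [sizeP, sizeS]; omega)
            (IsNF.ich hA hB) hC
        obtain ⟨N₄, hN₄, e₄⟩ :=
          ih (.st (.ich PA PB)) QD (by simp only [sizeP, sizeS]; omega)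
            (IsNF.ich hA hB) hD
        refine ⟨.st (.ich (.st (.ich N₁ N₂)) (.st (.ich N₃ N₄))),
          IsNF.ich (IsNF.ich hN₁ hN₂) (IsNF.ich hN₃ hN₄), ?_⟩
        exact (EqE.D3 PA PB QC QD).trans
          (EqE.congIch (EqE.congIch e₁ e₂) (EqE.congIch e₃ e₄))
      | @ext t ht =>
        have h3 := sizeP_pos PA; have h4 := sizeP_pos PB
        simp only [sizeP, sizeS] at hsz
        have d : EqE (echC (.st (.ich PA PB)) (.st t))
            (.st (.ich (echC (.st t) PA) (echC (.st t) PB))) :=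
          (EqE.E2 (.st (.ich PA PB)) (.st t)).trans
            (distIch (sizeS t) t le_rfl ht PA PB)
        obtain ⟨N₁, hN₁, e₁⟩ :=
          ih PA (.st t) (by simp only [sizeP, sizeS]; omega) hA (IsNF.ext ht)
        obtain ⟨N₂, hN₂, e₂⟩ :=
          ih PB (.st t) (by simp only [sizeP, sizeS]; omega) hB (IsNF.ext ht)
        refine ⟨.st (.ich N₁ N₂), IsNF.ich hN₁ hN₂, ?_⟩
        exact d.trans (EqE.congIch ((EqE.E2 (.st t) PA).trans e₁)
                                   ((EqE.E2 (.st t) PB).trans e₂))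
    | @ext s hs =>
      cases hQ with
      | @pch q QC QD hq0 hq1 hC hD =>
        have h1 := sizeP_pos QC; have h2 := sizeP_pos QD
        simp only [sizeP, sizeS] at hsz
        obtain ⟨N₁, hN₁, e₁⟩ :=
          ih (.st s) QC (by simp only [sizeP, sizeS]; omega) (IsNF.ext hs) hC
        obtain ⟨N₂, hN₂, e₂⟩ :=
          ih (.st s) QD (by simp only [sizeP, sizeS]; omega) (IsNF.ext hs) hD
        exact ⟨.pch q N₁ N₂, IsNF.pch hq0 hq1 hN₁ hN₂, EqE.congPch q e₁ e₂⟩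
      | @ich QC QD hC hD =>
        have h1 := sizeP_pos QC; have h2 := sizeP_pos QD
        simp only [sizeP, sizeS] at hsz
        obtain ⟨N₁, hN₁, e₁⟩ :=
          ih (.st s) QC (by simp only [sizeP, sizeS]; omega) (IsNF.ext hs) hC
        obtain ⟨N₂, hN₂, e₂⟩ :=
          ih (.st s) QD (by simp only [sizeP, sizeS]; omega) (IsNF.ext hs) hD
        exact ⟨.st (.ich N₁ N₂), IsNF.ich hN₁ hN₂,
          (distIch (sizeS s) s le_rfl hs QC QD).trans (EqE.congIch e₁ e₂)⟩
      | @ext t ht =>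
        exact ⟨.st (.ech s t), IsNF.ext (IsExtNF.ech hs ht), EqE.refl _⟩

lemma normal_form_aux {A : Type} : ∀ n : ℕ, ∀ P : PCSP A, sizeP P ≤ n →
    PNoPar P → PWF P → ∃ N, IsNF N ∧ EqE P N := by
  intro n
  induction n with
  | zero => intro P h _ _; have := sizeP_pos P; omega
  | succ n ih =>
    intro P hsz hPn hPw
    cases P with
    | pch p P Q =>
      cases hPn with | pch h1 h2 =>
      cases hPw with | pch hp0 hp1 w1 w2 =>
      have hp := sizeP_pos P; have hq := sizeP_pos Q
      simp only [sizeP] at hsz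
      obtain ⟨N₁, hN₁, e₁⟩ := ih P (by omega) h1 w1
      obtain ⟨N₂, hN₂, e₂⟩ := ih Q (by omega) h2 w2
      exact ⟨.pch p N₁ N₂, IsNF.pch hp0 hp1 hN₁ hN₂, EqE.congPch p e₁ e₂⟩
    | st s =>
      cases hPn with | st hsn =>
      cases hPw with | st hsw =>
      cases s with
      | nil => exact ⟨.st .nil, IsNF.ext IsExtNF.nil, EqE.refl _⟩
      | pre a P =>
        cases hsn with | pre h1 =>
        cases hsw with | pre w1 =>
        simp only [sizeP, sizeS] at hsz
        obtain ⟨N, hN, e⟩ := ih P (by omega) h1 w1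
        exact ⟨.st (.pre a N), IsNF.ext (IsExtNF.pre hN), EqE.congPre a e⟩
      | ich P Q =>
        cases hsn with | ich h1 h2 =>
        cases hsw with | ich w1 w2 =>
        have hp := sizeP_pos P; have hq := sizeP_pos Q
        simp only [sizeP, sizeS] at hsz
        obtain ⟨N₁, hN₁, e₁⟩ := ih P (by omega) h1 w1
        obtain ⟨N₂, hN₂, e₂⟩ := ih Q (by omega) h2 w2
        exact ⟨.st (.ich N₁ N₂), IsNF.ich hN₁ hN₂, EqE.congIch e₁ e₂⟩
      | ech s t =>
        cases hsn with | ech h1 h2 =>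
        cases hsw with | ech w1 w2 =>
        simp only [sizeP, sizeS] at hsz
        obtain ⟨N₁, hN₁, e₁⟩ :=
          ih (.st s) (by simp only [sizeP, sizeS]; omega) (PNoPar.st h1) (PWF.st w1)
        obtain ⟨N₂, hN₂, e₂⟩ :=
          ih (.st t) (by simp only [sizeP, sizeS]; omega) (PNoPar.st h2) (PWF.st w2)
        obtain ⟨N, hN, e⟩ := echNF (sizeP N₁ + sizeP N₂) N₁ N₂ le_rfl hN₁ hN₂
        exact ⟨N, hN, (EqE.congEch e₁ e₂).trans e⟩
      | par B s t => cases hsn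

/-- Proposition 8.4: every nCSP process is provably equal to a normal
form. -/
theorem normal_form_exists (A : Type) [Fintype A] (P : PCSP A)
    (hPn : PNoPar P) (hPw : PWF P) :
    ∃ N : PCSP A, IsNF N ∧ EqE P N := by
  exact normal_form_aux (sizeP P) P le_rfl hPn hPw

end PaperPCSP
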